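/- For every classical formula φ and every base B such that ⊮_B φ, there exists a maximally-consistent base B* with B ⊆ B* and ⊮_{B*} φ. -/

import Mathlib

structure BaseRule (At : Type) where
  prem : Finset At
  concl : At

abbrev Base (At : Type) := Set (BaseRule At)

inductive Closure {At : Type} (B : Base At) : At → Prop
  | step (r : BaseRule At) (hr : r ∈ B) (ih : ∀ q ∈ r.prem, Closure B q) :
      Closure B r.concl

inductive CForm (At : Type) where
  | atom : At → CForm At
  | bot  : CForm At
  | imp  : CForm At → CForm At → CForm At

def CValid {At : Type} : Base At → CForm At → Prop
  | B, .atom p  => Closure B p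
  | B, .bot     => ∀ p : At, Closure B p
  | B, .imp φ ψ => ∀ C : Base At, B ⊆ C → CValid C φ → CValid C ψ

def CCon {At : Type} (Γ : Set (CForm At)) (B : Base At) (φ : CForm At) : Prop :=
  ∀ C : Base At, B ⊆ C → (∀ ψ ∈ Γ, CValid C ψ) → CValid C φ

def CInconsistent {At : Type} (B : Base At) : Prop := CValid B CForm.bot

def CConsistent {At : Type} (B : Base At) : Prop := ¬ CInconsistent B

def CMaxCon {At : Type} (B : Base At) : Prop :=
  CConsistent B ∧ ∀ δ : BaseRule At, δ ∈ B ∨ CInconsistent (insert δ B)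

/-! A set `S` of atoms other than the set of all atoms determines the base `satisfiedRules S`
of all rules that `S` satisfies. Its closure is `S` and adding any rule outside it makes it inconsistent, so
validity at it is classical truth under the valuation `S`, and it is maximally consistent.
Conversely, if `⊮_B φ`, induction on `φ` produces such an `S` closed under the rules of `B`
(that is, `B ⊆ satisfiedRules S`) in which `φ` is false: for atoms and `⊥` take the closure
of `B`, and for `φ → ψ` a countermodel of `ψ` over an extension of `B` validating `φ`.
The base `satisfiedRules S` is then the required extension. -/

variable {At : Type}

theorem Closure.mono {B C : Base At} (h : B ⊆ C) {p : At} (hp : Closure B p) :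
    Closure C p := by
  induction hp with
  | step r hr _ ih => exact Closure.step r (h hr) ih

theorem CValid.mono {B C : Base At} (h : B ⊆ C) {φ : CForm At} (hφ : CValid B φ) :
    CValid C φ := by
  cases φ with
  | atom p => exact Closure.mono h hφ
  | bot => exact fun p => Closure.mono h (hφ p)
  | imp φ ψ => exact fun D hD => hφ D (h.trans hD)

theorem CInconsistent.mono {B C : Base At} (h : B ⊆ C) (hB : CInconsistent B) :
    CInconsistent C :=
  CValid.mono h hB

theorem CValid.of_inconsistent {B : Base At} (hB : CInconsistent B) (φ : CForm At) :
    CValid B φ := by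
  induction φ generalizing B with
  | atom p => exact hB p
  | bot => exact hB
  | imp φ ψ _ ihψ => exact fun D hD _ => ihψ (hB.mono hD)

def CForm.Holds (S : Set At) : CForm At → Prop
  | .atom p => p ∈ S
  | .bot => False
  | .imp φ ψ => φ.Holds S → ψ.Holds S

def satisfiedRules (S : Set At) : Base At := {δ | ↑δ.prem ⊆ S → δ.concl ∈ S}

theorem closure_satisfiedRules_iff {S : Set At} {p : At} :
    Closure (satisfiedRules S) p ↔ p ∈ S := by
  constructor
  · intro hp
    induction hp with
    | step r hr _ ih => exact hr ih
  · intro hp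
    exact Closure.step ⟨∅, p⟩ (fun _ => hp) (by simp)

theorem subset_satisfiedRules_setOf_closure (B : Base At) :
    B ⊆ satisfiedRules {p | Closure B p} :=
  fun δ hδ hprem => Closure.step δ hδ fun _ hq => hprem hq

/-- A rule `(L, c)` violated by `S` derives `c` from `S`, and together with the rules
`({c}, p) ∈ satisfiedRules S` it derives every atom `p`. -/
theorem inconsistent_insert_of_not_mem_satisfiedRules {S : Set At} {δ : BaseRule At}
    (hδ : δ ∉ satisfiedRules S) : CInconsistent (insert δ (satisfiedRules S)) := by
  obtain ⟨hprem, hconcl⟩ :=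
    Classical.not_imp.mp (show ¬((↑δ.prem : Set At) ⊆ S → δ.concl ∈ S) from hδ)
  have hδ_derived : Closure (insert δ (satisfiedRules S)) δ.concl :=
    Closure.step δ (Set.mem_insert _ _) fun q hq =>
      (closure_satisfiedRules_iff.mpr (hprem hq)).mono (Set.subset_insert _ _)
  intro p
  refine Closure.step ⟨{δ.concl}, p⟩ (Set.mem_insert_of_mem _ fun h => ?_) ?_
  · exact absurd (h (by simp)) hconcl
  · simpa using hδ_derived

theorem cValid_satisfiedRules_iff {S : Set At} (hS : S ≠ Set.univ) (φ : CForm At) :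
    CValid (satisfiedRules S) φ ↔ φ.Holds S := by
  induction φ with
  | atom p => exact closure_satisfiedRules_iff
  | bot =>
    obtain ⟨a, ha⟩ := (Set.ne_univ_iff_exists_notMem S).mp hS
    exact iff_of_false (fun h => ha (closure_satisfiedRules_iff.mp (h a))) id
  | imp φ ψ ihφ ihψ =>
    refine ⟨fun h hφ => ihψ.mp (h _ subset_rfl (ihφ.mpr hφ)), fun h D hD hφD => ?_⟩
    by_cases hDS : D ⊆ satisfiedRules S
    · have hD_eq : D = satisfiedRules S := hDS.antisymm hD
      subst hD_eq
      exact ihψ.mpr (h (ihφ.mp hφD))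
    · obtain ⟨δ, hδD, hδ⟩ := Set.not_subset.mp hDS
      exact CValid.of_inconsistent
        ((inconsistent_insert_of_not_mem_satisfiedRules hδ).mono (Set.insert_subset hδD hD)) ψ

theorem cMaxCon_satisfiedRules {S : Set At} (hS : S ≠ Set.univ) :
    CMaxCon (satisfiedRules S) := by
  refine ⟨fun h => (cValid_satisfiedRules_iff hS .bot).mp h, fun δ => ?_⟩
  by_cases hδ : δ ∈ satisfiedRules S
  · exact Or.inl hδ
  · exact Or.inr (inconsistent_insert_of_not_mem_satisfiedRules hδ)

theorem exists_countermodel_of_not_cValid {φ : CForm At} {B : Base At} (h : ¬ CValid B φ) :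
    ∃ S : Set At, S ≠ Set.univ ∧ B ⊆ satisfiedRules S ∧ ¬ φ.Holds S := by
  induction φ generalizing B with
  | atom p =>
    exact ⟨{q | Closure B q}, Set.ne_univ_iff_exists_notMem _ |>.mpr ⟨p, h⟩,
      subset_satisfiedRules_setOf_closure B, h⟩
  | bot =>
    obtain ⟨p, hp⟩ := not_forall.mp h
    exact ⟨{q | Closure B q}, Set.ne_univ_iff_exists_notMem _ |>.mpr ⟨p, hp⟩,
      subset_satisfiedRules_setOf_closure B, id⟩
  | imp φ ψ _ ihψ =>
    simp only [CValid, not_forall] at h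
    obtain ⟨C, hBC, hφC, hψC⟩ := h
    obtain ⟨S, hS, hCS, hψS⟩ := ihψ hψC
    have hφS : φ.Holds S := (cValid_satisfiedRules_iff hS φ).mp (hφC.mono hCS)
    exact ⟨S, hS, hBC.trans hCS, fun himp => hψS (himp hφS)⟩

theorem classical_maxcon_extension_general {At : Type}
    (φ : CForm At) (B : Base At) (h : ¬ CValid B φ) :
    ∃ Bstar : Base At, CMaxCon Bstar ∧ B ⊆ Bstar ∧ ¬ CValid Bstar φ := by
  obtain ⟨S, hS, hBS, hφS⟩ := exists_countermodel_of_not_cValid h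
  exact ⟨satisfiedRules S, cMaxCon_satisfiedRules hS, hBS,
    fun hφ => hφS ((cValid_satisfiedRules_iff hS φ).mp hφ)⟩

/-- maximally-consistent extension preserving non-validity. -/
theorem classical_maxcon_extension {At : Type} [Countable At] [Infinite At]
    (φ : CForm At) (B : Base At) (h : ¬ CValid B φ) :
    ∃ Bstar : Base At, CMaxCon Bstar ∧ B ⊆ Bstar ∧ ¬ CValid Bstar φ :=
  classical_maxcon_extension_general φ B h
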